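/- Let G be a graph and let t, t' be nontrivial terms. Then G satisfies the identity t ≈ t' if and only if the set of homomorphisms of G(t) into G equals the set of homomorphisms of G(t') into G (as maps defined on var(t) ∪ var(t') restricted appropriately, i.e., Hom(G(t),G) = Hom(G(t'),G) =: H) and h(L(t)) = h(L(t')) for every h ∈ H. -/

import Mathlib

open Classical

/-- A graph `(V, E)`: an ambient type `U`, a set `verts ⊆ U` of vertices and an
edge relation `Edge ⊆ verts × verts`. -/
structure AlgGraph : Type 1 where
  U : Type
  verts : Set U
  Edge : U → U → Prop
  edge_mem : ∀ a b, Edge a b → a ∈ verts ∧ b ∈ verts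

namespace AlgGraph

/-- The induced subgraph of `G` on a set `S`. -/
def induce (G : AlgGraph) (S : Set G.U) : AlgGraph where
  U := G.U
  verts := G.verts ∩ S
  Edge a b := G.Edge a b ∧ a ∈ S ∧ b ∈ S
  edge_mem a b h := ⟨⟨(G.edge_mem a b h.1).1, h.2.1⟩, (G.edge_mem a b h.1).2, h.2.2⟩

/-- The set of vertices reachable from `a` by a directed walk (including `a` itself). -/
def reachSet (G : AlgGraph) (a : G.U) : Set G.U := {b | Relation.ReflTransGen G.Edge a b}

/-- The subgraph of `G` induced by the set of vertices reachable from `a`. -/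
def reachSub (G : AlgGraph) (a : G.U) : AlgGraph := G.induce (G.reachSet a)

/-- A graph is undirected if its edge relation is symmetric. -/
def Undirected (G : AlgGraph) : Prop := ∀ a b, G.Edge a b → G.Edge b a

end AlgGraph

/-- A homomorphism of graphs: maps vertices to vertices and edges to edges. -/
def IsHom (G H : AlgGraph) (f : G.U → H.U) : Prop :=
  (∀ a ∈ G.verts, f a ∈ H.verts) ∧ ∀ a b, G.Edge a b → H.Edge (f a) (f b)

/-- A strong homomorphism: additionally maps non-edges to non-edges. -/
def IsStrongHom (G H : AlgGraph) (f : G.U → H.U) : Prop :=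
  IsHom G H f ∧ ∀ a ∈ G.verts, ∀ b ∈ G.verts, ¬ G.Edge a b → ¬ H.Edge (f a) (f b)

/-- Isomorphism of graphs. -/
def IsIsomorphic (G H : AlgGraph) : Prop :=
  ∃ f : G.U → H.U, Set.BijOn f G.verts H.verts ∧
    ∀ a ∈ G.verts, ∀ b ∈ G.verts, (G.Edge a b ↔ H.Edge (f a) (f b))

/-- Terms of type (2,0) over a variable set `X`: variables, the constant `∞`,
and a binary operation (juxtaposition). -/
inductive GTerm (X : Type) : Type
  | var : X → GTerm X
  | inf : GTerm X
  | app : GTerm X → GTerm X → GTerm X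

namespace GTerm

/-- The set of variables occurring in a term. -/
def vars {X : Type} : GTerm X → Set X
  | var x => {x}
  | inf => ∅
  | app t₁ t₂ => t₁.vars ∪ t₂.vars

/-- A term is nontrivial if it contains no occurrence of `∞`. -/
def Nontrivial {X : Type} : GTerm X → Prop
  | var _ => True
  | inf => False
  | app t₁ t₂ => t₁.Nontrivial ∧ t₂.Nontrivial

/-- The leftmost variable of a term (`none` for the bare constant `∞` on the left). -/
def leftVar {X : Type} : GTerm X → Option X
  | var x => some x
  | inf => none
  | app t₁ _ => t₁.leftVar

/-- The edge set of the term graph `G(t)`. -/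
def edges {X : Type} : GTerm X → Set (X × X)
  | var _ => ∅
  | inf => ∅
  | app t₁ t₂ =>
      t₁.edges ∪ t₂.edges ∪
        {p | ∃ x y, t₁.leftVar = some x ∧ t₂.leftVar = some y ∧ p = (x, y)}

theorem vars_finite {X : Type} (t : GTerm X) : t.vars.Finite := by
  induction t with
  | var x => simpa [vars] using Set.finite_singleton x
  | inf => simpa [vars] using Set.finite_empty
  | app t₁ t₂ ih₁ ih₂ => simpa [vars] using ih₁.union ih₂

end GTerm

/-- The term graph `G(t)` of a term `t`: vertices are the variables of `t`. -/
def termGraph {X : Type} (t : GTerm X) : AlgGraph where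
  U := X
  verts := t.vars
  Edge a b := (a, b) ∈ t.edges ∧ a ∈ t.vars ∧ b ∈ t.vars
  edge_mem a b h := ⟨h.2.1, h.2.2⟩

/-- Evaluation of a term in the graph algebra `A(G)`; `none` plays the role of `∞`:
`x · y = x` if `(x,y)` is an edge, and `∞` otherwise. -/
noncomputable def AlgGraph.eval (G : AlgGraph) {X : Type} (h : X → Option G.U) :
    GTerm X → Option G.U
  | .var x => h x
  | .inf => none
  | .app t₁ t₂ =>
      match G.eval h t₁, G.eval h t₂ with
      | some a, some b => if G.Edge a b then some a else none
      | _, _ => none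

/-- Identities: pairs of terms. -/
abbrev GId (X : Type) := GTerm X × GTerm X

/-- An assignment takes values in `V(G) ∪ {∞}`. -/
def AlgGraph.Assign (G : AlgGraph) {X : Type} (h : X → Option G.U) : Prop :=
  ∀ x a, h x = some a → a ∈ G.verts

/-- The assignment `h` makes the identity `e` true in `A(G)`. -/
def AlgGraph.SatIdWith (G : AlgGraph) {X : Type} (h : X → Option G.U) (e : GId X) : Prop :=
  G.eval h e.1 = G.eval h e.2

/-- `G` satisfies the identity `e`. -/
def AlgGraph.SatId (G : AlgGraph) {X : Type} (e : GId X) : Prop :=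
  ∀ h : X → Option G.U, G.Assign h → G.SatIdWith h e

/-- An implication (quasi-identity) over the standard countably infinite
variable set `ℕ`: a finite set of identities (the premise) and an identity
(the consequence). -/
structure Imp : Type where
  prem : Set (GId ℕ)
  concl : GId ℕ
  prem_fin : prem.Finite

/-- `G` satisfies the implication `imp`. -/
def AlgGraph.SatImp (G : AlgGraph) (imp : Imp) : Prop :=
  ∀ h : ℕ → Option G.U, G.Assign h →
    (∀ e ∈ imp.prem, G.SatIdWith h e) → G.SatIdWith h imp.concl

/-- The implications satisfied by every member of a class `K` of graphs. -/
def qId (K : Set AlgGraph) : Set Imp := {imp | ∀ G ∈ K, G.SatImp imp}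

/-- The class of graphs satisfying every implication of `Sg`. -/
def ModI (Sg : Set Imp) : Set AlgGraph := {G | ∀ imp ∈ Sg, G.SatImp imp}

/-- The finite members of `ModI Sg`. -/
def ModIf (Sg : Set Imp) : Set AlgGraph := {G | G ∈ ModI Sg ∧ G.verts.Finite}

/-- The pointed graph `G^⊥`: a new vertex `⊥ = none` with edges from `⊥` to all
vertices, including a loop at `⊥`. -/
def AlgGraph.pointed (G : AlgGraph) : AlgGraph where
  U := Option G.U
  verts := insert none (some '' G.verts)
  Edge a b := b ∈ insert none (some '' G.verts) ∧
    (a = none ∨ ∃ u v, a = some u ∧ b = some v ∧ G.Edge u v)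
  edge_mem a b h := by
    refine ⟨?_, h.1⟩
    rcases h.2 with rfl | ⟨u, v, rfl, rfl, huv⟩
    · exact Set.mem_insert _ _
    · exact Set.mem_insert_of_mem _ ⟨u, (G.edge_mem u v huv).1, rfl⟩

/-- Direct product of a family of graphs (componentwise edges). -/
def gProd {I : Type} (G : I → AlgGraph) : AlgGraph where
  U := (i : I) → (G i).U
  verts := {a | ∀ i, a i ∈ (G i).verts}
  Edge a b := ∀ i, (G i).Edge (a i) (b i)
  edge_mem a b h :=
    ⟨fun i => ((G i).edge_mem _ _ (h i)).1, fun i => ((G i).edge_mem _ _ (h i)).2⟩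

/-- The pointed product `∏ i, (G i)^⊥` of a family of graphs. -/
def pointedProd {I : Type} (G : I → AlgGraph) : AlgGraph := gProd fun i => (G i).pointed

/-- `W` is a strong pointed subproduct of the family `G`:
(1) `W` is an induced subgraph of the pointed product;
(2) every vertex has nonempty support;
(3) for every vertex `a` and every `k` in the support of `a`, the projection `p k`
restricted to `reach_W(a)` is a strong homomorphism into `G k`. -/
def IsSPSofFam {I : Type} (G : I → AlgGraph) (W : AlgGraph) : Prop :=
  ∃ S : Set (pointedProd G).U,
    W = (pointedProd G).induce S ∧
    (∀ a ∈ ((pointedProd G).induce S).verts, ∃ i, a i ≠ none) ∧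
    (∀ a ∈ ((pointedProd G).induce S).verts, ∀ k : I, a k ≠ none →
      (∀ b ∈ (((pointedProd G).induce S).reachSub a).verts, b k ≠ none) ∧
      (∀ b ∈ (((pointedProd G).induce S).reachSub a).verts,
        ∀ u, b k = some u → u ∈ (G k).verts) ∧
      (∀ b ∈ (((pointedProd G).induce S).reachSub a).verts,
       ∀ c ∈ (((pointedProd G).induce S).reachSub a).verts,
        ∀ u v, b k = some u → c k = some v →
          ((((pointedProd G).induce S).reachSub a).Edge b c ↔ (G k).Edge u v)))

/-- The class of all strong pointed subproducts of families of members of `K`. -/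
def Psps (K : Set AlgGraph) : Set AlgGraph :=
  {W | ∃ (I : Type) (G : I → AlgGraph), (∀ i, G i ∈ K) ∧ IsSPSofFam G W}

/-- The finite members of `Psps K`. -/
def PspsFin (K : Set AlgGraph) : Set AlgGraph := {W | W ∈ Psps K ∧ W.verts.Finite}

/-- Isomorphic copies of members of a class of graphs. -/
def Icl (C : Set AlgGraph) : Set AlgGraph := {W | ∃ V ∈ C, IsIsomorphic V W}

/-- `W` is the union of a directed family of members of `C` (the members of the
family are induced subgraphs of a common member, pairwise). -/
def IsDirUnionOf (W : AlgGraph) (C : Set AlgGraph) : Prop :=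
  ∃ (ι : Type) (V : ι → Set W.U) (E : ι → W.U → W.U → Prop)
    (hmem : ∀ i, ∀ a b, E i a b → a ∈ V i ∧ b ∈ V i),
    (∀ i, AlgGraph.mk W.U (V i) (E i) (hmem i) ∈ C) ∧
    (∀ i j, ∃ k,
      (V i ⊆ V k ∧ ∀ a b, E i a b ↔ E k a b ∧ a ∈ V i ∧ b ∈ V i) ∧
      (V j ⊆ V k ∧ ∀ a b, E j a b ↔ E k a b ∧ a ∈ V j ∧ b ∈ V j)) ∧
    W.verts = ⋃ i, V i ∧
    ∀ a b, W.Edge a b ↔ ∃ i, E i a b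

/-- The class of all directed unions of members of `C`. -/
def DCl (C : Set AlgGraph) : Set AlgGraph := {W | IsDirUnionOf W C}

/-- Condition (a) of Proposition `IPK-ab`. -/
def CondA (K : Set AlgGraph) (W : AlgGraph) : Prop :=
  ∀ a ∈ W.verts, ∃ Ga ∈ K, ∃ φ : W.U → Ga.U, IsStrongHom (W.reachSub a) Ga φ

/-- Condition (b) of Proposition `IPK-ab`. -/
def CondB (K : Set AlgGraph) (W : AlgGraph) : Prop :=
  ∀ a ∈ W.verts, ∀ a' ∈ W.verts, a ≠ a' → W.reachSet a = W.reachSet a' →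
    ∃ Gp ∈ K, ∃ φ : W.U → Gp.U, IsStrongHom (W.reachSub a) Gp φ ∧ φ a ≠ φ a'

/-- The identities `x_a x_b ≈ x_a` for edges `(a,b)` of `G` (variables are the
vertices of `G`). -/
def GammaE (G : AlgGraph) : Set (GId G.U) :=
  {e | ∃ a b, G.Edge a b ∧ e = (GTerm.app (GTerm.var a) (GTerm.var b), GTerm.var a)}

/-- The identities `x_a x_b ≈ ∞` for non-edges `(a,b)` of `G`. -/
def GammaN (G : AlgGraph) : Set (GId G.U) :=
  {e | ∃ a b, a ∈ G.verts ∧ b ∈ G.verts ∧ ¬ G.Edge a b ∧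
    e = (GTerm.app (GTerm.var a) (GTerm.var b), GTerm.inf)}

/-- `Σ(G) = Γ_e(G) ∪ Γ_n(G)`. -/
def SigmaIds (G : AlgGraph) : Set (GId G.U) := GammaE G ∪ GammaN G

theorem SigmaIds_finite (G : AlgGraph) (hfin : G.verts.Finite) : (SigmaIds G).Finite := by
  classical
  have hsub : SigmaIds G ⊆
      (fun p : G.U × G.U =>
        if G.Edge p.1 p.2 then
          (GTerm.app (GTerm.var p.1) (GTerm.var p.2), GTerm.var p.1)
        else (GTerm.app (GTerm.var p.1) (GTerm.var p.2), GTerm.inf)) ''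
        (G.verts ×ˢ G.verts) := by
    rintro e (⟨a, b, hab, rfl⟩ | ⟨a, b, ha, hb, hnab, rfl⟩)
    · exact ⟨(a, b), Set.mk_mem_prod (G.edge_mem a b hab).1 (G.edge_mem a b hab).2,
        by simp [hab]⟩
    · exact ⟨(a, b), Set.mk_mem_prod ha hb, by simp [hnab]⟩
  exact ((hfin.prod hfin).image _).subset hsub

/-- The set of homomorphisms of the term graph `G(t)` into `G`, encoded as
partial maps `X → V(G) ∪ {∞}` whose domain of definition is exactly `var(t)`. -/
def PHomSet (G : AlgGraph) {X : Type} (t : GTerm X) : Set (X → Option G.U) :=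
  {h | (∀ x, h x ≠ none ↔ x ∈ t.vars) ∧
       (∀ x a, h x = some a → a ∈ G.verts) ∧
       (∀ x y, (termGraph t).Edge x y →
         ∃ a b, h x = some a ∧ h y = some b ∧ G.Edge a b)}

/-! Under an assignment `h`, a nontrivial term `t` evaluates to `h(L(t))` if `h` is defined on
`var(t)` and maps every edge of `G(t)` to an edge of `G`, and to `∞` otherwise. Hence `t ≈ t'`
holds iff the two terms are defined under the same assignments, with equal values at their
leftmost variables; restricting an assignment to `var(t)` or `var(t')` turns this into the
statement about homomorphisms of the term graphs. -/

namespace GTerm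

variable {X : Type}

theorem leftVar_mem_vars : ∀ {t : GTerm X} {x : X}, t.leftVar = some x → x ∈ t.vars
  | .var _, _, h => by simp_all [leftVar, vars]
  | .inf, _, h => by simp [leftVar] at h
  | .app _ _, _, h => Or.inl (leftVar_mem_vars h)

theorem Nontrivial.exists_leftVar : ∀ {t : GTerm X}, t.Nontrivial → ∃ x, t.leftVar = some x
  | .var y, _ => ⟨y, rfl⟩
  | .app t₁ _, h => Nontrivial.exists_leftVar (t := t₁) h.1

theorem mem_vars_of_mem_edges : ∀ {t : GTerm X} {x y : X}, (x, y) ∈ t.edges →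
    x ∈ t.vars ∧ y ∈ t.vars
  | .app _ _, _, _, h => by
    rcases h with (h | h) | h
    · exact ⟨Or.inl (mem_vars_of_mem_edges h).1, Or.inl (mem_vars_of_mem_edges h).2⟩
    · exact ⟨Or.inr (mem_vars_of_mem_edges h).1, Or.inr (mem_vars_of_mem_edges h).2⟩
    · obtain ⟨a, b, ha, hb, hp⟩ := h
      obtain ⟨rfl, rfl⟩ := Prod.mk.inj hp
      exact ⟨Or.inl (leftVar_mem_vars ha), Or.inr (leftVar_mem_vars hb)⟩

end GTerm

namespace AlgGraph

open GTerm

variable {G : AlgGraph} {X : Type} {h h' : X → Option G.U} {t t' : GTerm X}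

theorem eval_app_eq_some {t₁ t₂ : GTerm X} {a : G.U} :
    G.eval h (.app t₁ t₂) = some a ↔
      G.eval h t₁ = some a ∧ ∃ b, G.eval h t₂ = some b ∧ G.Edge a b := by
  simp only [eval]
  split <;> grind

theorem eval_congr : ∀ {t : GTerm X}, (∀ x ∈ t.vars, h x = h' x) → G.eval h t = G.eval h' t
  | .var _, hag => hag _ rfl
  | .inf, _ => rfl
  | .app _ _, hag => by
    simp only [eval, eval_congr fun x hx => hag x (Or.inl hx),
      eval_congr fun x hx => hag x (Or.inr hx)]

theorem eval_eq_of_leftVar {x : X} :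
    ∀ {t : GTerm X}, t.leftVar = some x → G.eval h t ≠ none → G.eval h t = h x
  | .var _, hx, _ => by simp_all [leftVar, eval]
  | .inf, hx, _ => by simp [leftVar] at hx
  | .app t₁ _, hx, hne => by
    obtain ⟨a, ha⟩ := Option.ne_none_iff_exists'.1 hne
    have h₁ := (eval_app_eq_some.1 ha).1
    rw [ha, ← h₁]
    exact eval_eq_of_leftVar hx (by simp [h₁])

theorem ne_none_of_eval_ne_none :
    ∀ {t : GTerm X}, G.eval h t ≠ none → ∀ x ∈ t.vars, h x ≠ none
  | .var _, hne, _, rfl => hne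
  | .inf, hne, _, _ => absurd rfl hne
  | .app _ _, hne, x, hx => by
    obtain ⟨a, ha⟩ := Option.ne_none_iff_exists'.1 hne
    obtain ⟨h₁, b, h₂, -⟩ := eval_app_eq_some.1 ha
    rcases hx with hx | hx
    · exact ne_none_of_eval_ne_none (by simp [h₁]) x hx
    · exact ne_none_of_eval_ne_none (by simp [h₂]) x hx

theorem edge_of_eval_ne_none : ∀ {t : GTerm X}, G.eval h t ≠ none →
    ∀ x y, (x, y) ∈ t.edges → ∃ a b, h x = some a ∧ h y = some b ∧ G.Edge a b
  | .app t₁ t₂, hne, x, y, hxy => by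
    obtain ⟨a, ha⟩ := Option.ne_none_iff_exists'.1 hne
    obtain ⟨h₁, b, h₂, hab⟩ := eval_app_eq_some.1 ha
    rcases hxy with (hxy | hxy) | ⟨x, y, hx, hy, hxy⟩
    · exact edge_of_eval_ne_none (by simp [h₁]) x y hxy
    · exact edge_of_eval_ne_none (by simp [h₂]) x y hxy
    · obtain ⟨rfl, rfl⟩ := Prod.mk.inj hxy
      exact ⟨a, b, h₁ ▸ (eval_eq_of_leftVar hx (by simp [h₁])).symm,
        h₂ ▸ (eval_eq_of_leftVar hy (by simp [h₂])).symm, hab⟩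

theorem eval_ne_none_of_edge : ∀ {t : GTerm X}, t.Nontrivial → (∀ x ∈ t.vars, h x ≠ none) →
    (∀ x y, (x, y) ∈ t.edges → ∃ a b, h x = some a ∧ h y = some b ∧ G.Edge a b) →
    G.eval h t ≠ none
  | .var x, _, hdom, _ => hdom x rfl
  | .app t₁ t₂, ⟨ht₁, ht₂⟩, hdom, hedge => by
    have hne₁ := eval_ne_none_of_edge ht₁ (fun x hx => hdom x (Or.inl hx))
      (fun x y hxy => hedge x y (Or.inl (Or.inl hxy)))
    have hne₂ := eval_ne_none_of_edge ht₂ (fun x hx => hdom x (Or.inr hx))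
      (fun x y hxy => hedge x y (Or.inl (Or.inr hxy)))
    obtain ⟨y₁, hy₁⟩ := ht₁.exists_leftVar
    obtain ⟨y₂, hy₂⟩ := ht₂.exists_leftVar
    obtain ⟨a, b, ha, hb, hab⟩ := hedge y₁ y₂ (Or.inr ⟨y₁, y₂, hy₁, hy₂, rfl⟩)
    rw [← eval_eq_of_leftVar hy₁ hne₁] at ha
    rw [← eval_eq_of_leftVar hy₂ hne₂] at hb
    simp [eval, ha, hb, hab]

theorem SatId.symm (hsat : G.SatId (t, t')) : G.SatId (t', t) :=
  fun h hA => (hsat h hA).symm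

theorem Assign.piecewise (hA : G.Assign h) (s : Set X) :
    G.Assign (s.piecewise h fun _ => none) := by
  intro x a hx
  by_cases hxs : x ∈ s
  · exact hA x a (by simpa [hxs] using hx)
  · simp [hxs] at hx

end AlgGraph

section

open AlgGraph

variable {G : AlgGraph} {X : Type} {h : X → Option G.U} {t t' : GTerm X}

theorem mem_PHomSet_iff (ht : t.Nontrivial) :
    h ∈ PHomSet G t ↔ (∀ x, h x ≠ none ↔ x ∈ t.vars) ∧ G.Assign h ∧ G.eval h t ≠ none := by
  constructor
  · rintro ⟨hdom, hA, hedge⟩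
    refine ⟨hdom, hA, eval_ne_none_of_edge ht (fun x hx => (hdom x).2 hx) fun x y hxy => ?_⟩
    exact hedge x y ⟨hxy, GTerm.mem_vars_of_mem_edges hxy⟩
  · rintro ⟨hdom, hA, hne⟩
    exact ⟨hdom, hA, fun x y hxy => edge_of_eval_ne_none hne x y hxy.1⟩

theorem eval_piecewise_of_vars_subset {s : Set X} (hs : t.vars ⊆ s) :
    G.eval (s.piecewise h fun _ => none) t = G.eval h t :=
  eval_congr fun x hx => by simp [hs hx]

theorem piecewise_mem_PHomSet (ht : t.Nontrivial) (hA : G.Assign h)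
    (hne : G.eval h t ≠ none) : t.vars.piecewise h (fun _ => none) ∈ PHomSet G t := by
  refine (mem_PHomSet_iff ht).2 ⟨fun x => ?_, hA.piecewise _, ?_⟩
  · by_cases hx : x ∈ t.vars
    · simpa [hx] using ne_none_of_eval_ne_none hne x hx
    · simp [hx]
  · rwa [eval_piecewise_of_vars_subset subset_rfl]

/-- Killing the variables outside `var(t')` leaves `t'` defined, hence also `t`. -/
theorem vars_subset_of_satId (hsat : G.SatId (t, t')) (hA : G.Assign h)
    (hne : G.eval h t' ≠ none) : t.vars ⊆ t'.vars := by
  set h' := t'.vars.piecewise h fun _ => none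
  have hne' : G.eval h' t ≠ none := by
    rwa [hsat h' (hA.piecewise _), eval_piecewise_of_vars_subset subset_rfl]
  intro x hx
  by_contra hx'
  exact ne_none_of_eval_ne_none hne' x hx (by simp [h', hx'])

theorem PHomSet_subset_of_satId (ht : t.Nontrivial) (hsat : G.SatId (t, t')) :
    PHomSet G t ⊆ PHomSet G t' := by
  intro h hh
  obtain ⟨hdom, hA, hne⟩ := (mem_PHomSet_iff ht).1 hh
  have hne' : G.eval h t' ≠ none := hsat h hA ▸ hne
  refine ⟨fun x => ⟨fun hx => vars_subset_of_satId hsat hA hne' ((hdom x).1 hx),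
    fun hx => ne_none_of_eval_ne_none hne' x hx⟩, hA, fun x y hxy => ?_⟩
  exact edge_of_eval_ne_none hne' x y hxy.1

theorem apply_leftVar_eq_of_satId (ht : t.Nontrivial) (hsat : G.SatId (t, t')) {x₀ x₀' : X}
    (hx₀ : t.leftVar = some x₀) (hx₀' : t'.leftVar = some x₀') (hh : h ∈ PHomSet G t) :
    h x₀ = h x₀' := by
  obtain ⟨-, hA, hne⟩ := (mem_PHomSet_iff ht).1 hh
  rw [← eval_eq_of_leftVar hx₀ hne, hsat h hA,
    eval_eq_of_leftVar hx₀' (hsat h hA ▸ hne)]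

/-- Restricting `h` to `var(t)` gives a homomorphism of `G(t)`, hence of `G(t')`; so `t'` is
defined as well, and both terms evaluate to the common value at their leftmost variables. -/
theorem eval_eq_of_PHomSet_eq (ht : t.Nontrivial) (ht' : t'.Nontrivial) {x₀ x₀' : X}
    (hx₀ : t.leftVar = some x₀) (hx₀' : t'.leftVar = some x₀')
    (hEq : PHomSet G t = PHomSet G t') (hL : ∀ h ∈ PHomSet G t, h x₀ = h x₀')
    (hA : G.Assign h) (hne : G.eval h t ≠ none) : G.eval h t = G.eval h t' := by
  set h₁ := t.vars.piecewise h fun _ => none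
  have hh₁ : h₁ ∈ PHomSet G t := piecewise_mem_PHomSet ht hA hne
  obtain ⟨hdom', -, hne'⟩ := (mem_PHomSet_iff ht').1 (hEq ▸ hh₁)
  have hvars : t'.vars ⊆ t.vars := fun x hx => by
    by_contra hxt
    exact (hdom' x).2 hx (by simp [h₁, hxt])
  have hne₁ : G.eval h₁ t ≠ none := by rwa [eval_piecewise_of_vars_subset subset_rfl]
  calc G.eval h t = G.eval h₁ t := (eval_piecewise_of_vars_subset subset_rfl).symm
    _ = h₁ x₀ := eval_eq_of_leftVar hx₀ hne₁
    _ = h₁ x₀' := hL h₁ hh₁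
    _ = G.eval h₁ t' := (eval_eq_of_leftVar hx₀' hne').symm
    _ = G.eval h t' := eval_piecewise_of_vars_subset hvars

end

/-- `G ⊨ t ≈ t'` iff `Hom(G(t),G) = Hom(G(t'),G) =: H` and
`h(L(t)) = h(L(t'))` for every `h ∈ H`. -/
theorem statement_1 (G : AlgGraph) (X : Type) (t t' : GTerm X)
    (ht : t.Nontrivial) (ht' : t'.Nontrivial)
    (x0 x0' : X) (hx0 : t.leftVar = some x0) (hx0' : t'.leftVar = some x0') :
    G.SatId (t, t') ↔
      (PHomSet G t = PHomSet G t' ∧ ∀ h ∈ PHomSet G t, h x0 = h x0') := by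
  constructor
  · intro hsat
    exact ⟨(PHomSet_subset_of_satId ht hsat).antisymm (PHomSet_subset_of_satId ht' hsat.symm),
      fun h hh => apply_leftVar_eq_of_satId ht hsat hx0 hx0' hh⟩
  · rintro ⟨hEq, hL⟩ h hA
    have hL' : ∀ h ∈ PHomSet G t', h x0' = h x0 := fun h hh => (hL h (hEq ▸ hh)).symm
    by_cases hne : G.eval h t = none
    · by_cases hne' : G.eval h t' = none
      · exact hne.trans hne'.symm
      · exact (eval_eq_of_PHomSet_eq ht' ht hx0' hx0 hEq.symm hL' hA hne').symm
    · exact eval_eq_of_PHomSet_eq ht ht' hx0 hx0' hEq hL hA hne
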